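/- Let D be an arc-locally in-semicomplete digraph, and let H be an induced connected bipartite subdigraph of D with bipartition (X, Y), |X| ≥ 1, |Y| ≥ 1, such that every edge between X and Y is directed from X to Y. Let v be a vertex of D outside V(H) that dominates some vertex of X and has no in-neighbor in X. Then v dominates every vertex of X and no vertex of X dominates v. -/

import Mathlib

/-!
Walk through `H` from a vertex `x₀ ∈ X` with `v → x₀`, maintaining the invariant that the
current vertex `w` is, for some `a ∈ X` with `v → a`, equal to `a` or dominated by `a`; on `X`
stability collapses this to `v → w`. The only non-trivial step enters `X` from `Y` along an arc
`c → b`, where `a → b` and `v → a`: arc-local in-semicompleteness applied to the arc `a → b` makes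
`v` and `c` adjacent, and since `c` does not dominate `v`, we get `v → c`.
-/

open Set

namespace Paper

variable {V : Type*}

/-- `u` and `v` are adjacent in the underlying graph of the digraph `E`. -/
def Adj (E : V → V → Prop) (u v : V) : Prop := E u v ∨ E v u

/-- A stable set: pairwise non-adjacent vertices. -/
def Stable (E : V → V → Prop) (S : Set V) : Prop :=
  ∀ u ∈ S, ∀ v ∈ S, u ≠ v → ¬ Adj E u v

/-- A stable set of the subdigraph induced by `W`. -/
def StableOn (E : V → V → Prop) (W S : Set V) : Prop := S ⊆ W ∧ Stable E S

/-- A maximum stable set of the subdigraph induced by `W`. -/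
def MaxStableOn (E : V → V → Prop) (W S : Set V) : Prop :=
  StableOn E W S ∧ ∀ T, StableOn E W T → T.ncard ≤ S.ncard

/-- Neighborhood of `S`: vertices outside `S` adjacent to some vertex of `S`. -/
def Nbhd (E : V → V → Prop) (S : Set V) : Set V :=
  {v | v ∉ S ∧ ∃ u ∈ S, Adj E u v}

/-- A (nonempty) directed path, as a list of vertices. -/
def IsPath (E : V → V → Prop) (p : List V) : Prop := p ≠ [] ∧ p.Chain' E

/-- A path partition of the vertex set `W` into vertex-disjoint directed paths. -/
def PathPartitionOn (E : V → V → Prop) (W : Set V) (P : List (List V)) : Prop :=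
  (∀ p ∈ P, IsPath E p) ∧ P.flatten.Nodup ∧ ∀ v, v ∈ P.flatten ↔ v ∈ W

/-- `S` and `P` are orthogonal: each path contains exactly one vertex of `S`. -/
def Orthogonal (S : Set V) (P : List (List V)) : Prop :=
  ∀ p ∈ P, ∃! v, v ∈ p ∧ v ∈ S

/-- An `S`-path partition of `W`. -/
def SPartOn (E : V → V → Prop) (W S : Set V) (P : List (List V)) : Prop :=
  PathPartitionOn E W P ∧ Orthogonal S P

/-- An `S_BE`-path partition of `W`: orthogonal and every vertex of `S` starts or
ends its path. -/
def BEPartOn (E : V → V → Prop) (W S : Set V) (P : List (List V)) : Prop :=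
  SPartOn E W S P ∧ ∀ p ∈ P, ∀ v ∈ p, v ∈ S → p.head? = some v ∨ p.getLast? = some v

/-- The induced subdigraph on `W` satisfies the α-property. -/
def AlphaPropOn (E : V → V → Prop) (W : Set V) : Prop :=
  ∀ S, MaxStableOn E W S → ∃ P, SPartOn E W S P

/-- The induced subdigraph on `W` satisfies the BE-property. -/
def BEPropOn (E : V → V → Prop) (W : Set V) : Prop :=
  ∀ S, MaxStableOn E W S → ∃ P, BEPartOn E W S P

/-- A matching (w.r.t. a symmetric-or-not adjacency `A`) whose edges go from `X`
to `Y`: pairwise vertex-disjoint edges. -/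
def MatchingBetween (A : V → V → Prop) (X Y : Set V) (M : Set (V × V)) : Prop :=
  (∀ e ∈ M, e.1 ∈ X ∧ e.2 ∈ Y ∧ A e.1 e.2) ∧
  (∀ e ∈ M, ∀ f ∈ M, e ≠ f →
    e.1 ≠ f.1 ∧ e.1 ≠ f.2 ∧ e.2 ≠ f.1 ∧ e.2 ≠ f.2)

/-- The matching `M` covers the set `X`. -/
def Covers (M : Set (V × V)) (X : Set V) : Prop :=
  ∀ x ∈ X, ∃ e ∈ M, e.1 = x ∨ e.2 = x

/-- Arc-locally in-semicomplete digraph. -/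
def ArcLocallyInSemicomplete (E : V → V → Prop) : Prop :=
  ∀ u v, E u v → ∀ a b, E a u → E b v → a = b ∨ Adj E a b

/-- `A ↦ B`: every vertex of `A` dominates every vertex of `B`, and no edge from
`B` to `A`. -/
def Domin (E : V → V → Prop) (A B : Set V) : Prop :=
  (∀ a ∈ A, ∀ b ∈ B, E a b) ∧ ∀ a ∈ A, ∀ b ∈ B, ¬ E b a

/-- `A ⇒ B`: there is no edge from `B` to `A`. -/
def NoBack (E : V → V → Prop) (A B : Set V) : Prop :=
  ∀ a ∈ A, ∀ b ∈ B, ¬ E b a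

/-- The induced subdigraph on `W` has bipartite underlying graph. -/
def BipartiteOn (E : V → V → Prop) (W : Set V) : Prop :=
  ∃ A B : Set V, A ∪ B = W ∧ Disjoint A B ∧
    (∀ u ∈ A, ∀ v ∈ A, ¬ Adj E u v) ∧ (∀ u ∈ B, ∀ v ∈ B, ¬ Adj E u v)

/-- There is a directed walk of length `n` from `u` to `v`. -/
def WalkLen (E : V → V → Prop) : ℕ → V → V → Prop
  | 0, u, v => u = v
  | n+1, u, v => ∃ w, E u w ∧ WalkLen E n w v

/-- The set of vertices at distance exactly `d` from the set `A`. -/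
def Nd (E : V → V → Prop) (A : Set V) (d : ℕ) : Set V :=
  {v | (∃ u ∈ A, WalkLen E d u v) ∧ ∀ d' < d, ¬ ∃ u ∈ A, WalkLen E d' u v}

/-- Out-neighborhood of a set: vertices outside `A` dominated by some vertex of `A`. -/
def NplusSet (E : V → V → Prop) (A : Set V) : Set V :=
  {v | v ∉ A ∧ ∃ u ∈ A, E u v}

/-- The induced subdigraph on `W` is the extended cycle `Q[X 0, …, X (k-1)]`. -/
def ExtCycleOn (E : V → V → Prop) (k : ℕ) (X : ZMod k → Set V) (W : Set V) : Prop :=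
  (⋃ i, X i) = W ∧ (∀ i j, i ≠ j → Disjoint (X i) (X j)) ∧
  (∀ i, (X i).Nonempty) ∧ (∀ i, Stable E (X i)) ∧
  (∀ u ∈ W, ∀ v ∈ W, (E u v ↔ ∃ i, u ∈ X i ∧ v ∈ X (i + 1)))

/-- The partition `(V₁,V₂,V₃)` from the structure theorem for arc-locally
in-semicomplete digraphs, with `D[V₂]` an odd extended cycle of length `k ≥ 5`. -/
def StructPartition (E : V → V → Prop) (V1 V2 V3 : Set V)
    (k : ℕ) (X : ZMod k → Set V) : Prop :=
  V1 ∪ V2 ∪ V3 = Set.univ ∧ Disjoint V1 V2 ∧ Disjoint V1 V3 ∧ Disjoint V2 V3 ∧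
  Domin E V1 V2 ∧ NoBack E V1 V3 ∧ NoBack E V2 V3 ∧
  5 ≤ k ∧ Odd k ∧ ExtCycleOn E k X V2 ∧ BipartiteOn E V3

/-- `D` contains an induced blocking odd cycle. -/
def HasInducedBlockingOddCycle (E : V → V → Prop) : Prop :=
  ∃ n : ℕ, Odd n ∧ 3 ≤ n ∧ ∃ f : ZMod n → V, Function.Injective f ∧
    (∀ i j : ZMod n, Adj E (f i) (f j) ↔ (j = i + 1 ∨ i = j + 1)) ∧
    (∀ i, ¬ E (f i) (f 0)) ∧ (∀ i, ¬ E (f 1) (f i))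

/-- Stability number of the induced subdigraph on `W`. -/
noncomputable def alphaOn (E : V → V → Prop) (W : Set V) : ℕ :=
  sSup {n | ∃ S, StableOn E W S ∧ S.ncard = n}

end Paper

namespace Paper

variable {V : Type*} {E : V → V → Prop}

theorem Adj.symm {u w : V} (h : Adj E u w) : Adj E w u := Or.symm h

theorem Stable.eq_of_adj {S : Set V} (hS : Stable E S) {u w : V} (hu : u ∈ S) (hw : w ∈ S)
    (h : Adj E u w) : u = w :=
  by_contra fun hne => hS u hu w hw hne h

theorem NoBack.rel_of_adj {A B : Set V} (h : NoBack E A B) {a b : V} (ha : a ∈ A) (hb : b ∈ B)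
    (hab : Adj E a b) : E a b :=
  hab.resolve_right (h a ha b hb)

theorem ArcLocallyInSemicomplete.rel_of_in_neighbors (hE : ArcLocallyInSemicomplete E)
    {a b v c : V} (hab : E a b) (hva : E v a) (hcb : E c b) (hne : v ≠ c) (hcv : ¬ E c v) :
    E v c :=
  ((hE a b hab v c hva hcb).resolve_left hne).resolve_right hcv

def OutReach (E : V → V → Prop) (X : Set V) (v w : V) : Prop :=
  ∃ a ∈ X, E v a ∧ (a = w ∨ E a w)

theorem OutReach.rel_of_mem {X : Set V} {v w : V} (hX : Stable E X) (h : OutReach E X v w)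
    (hw : w ∈ X) : E v w := by
  obtain ⟨a, ha, hva, haw⟩ := h
  have : a = w := haw.elim id fun haw => hX.eq_of_adj ha hw (Or.inl haw)
  exact this ▸ hva

section Propagation

variable {X Y : Set V} {v : V} (hE : ArcLocallyInSemicomplete E)
  (hX : Stable E X) (hY : Stable E Y) (hXY : NoBack E X Y) (hvX : v ∉ X)
  (hnoin : ∀ x ∈ X, ¬ E x v)
include hE hX hY hXY hvX hnoin

theorem OutReach.of_adj {b c : V} (hb : b ∈ X ∪ Y) (hc : c ∈ X ∪ Y) (hbc : Adj E b c)
    (h : OutReach E X v b) : OutReach E X v c := by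
  by_cases hbX : b ∈ X
  · have hvb := h.rel_of_mem hX hbX
    rcases hc with hcX | hcY
    · exact ⟨b, hbX, hvb, Or.inl (hX.eq_of_adj hbX hcX hbc)⟩
    · exact ⟨b, hbX, hvb, Or.inr (hXY.rel_of_adj hbX hcY hbc)⟩
  have hbY : b ∈ Y := hb.resolve_left hbX
  obtain ⟨a, haX, hva, hab | hab⟩ := h
  · exact absurd (hab ▸ haX) hbX
  by_cases hcX : c ∈ X
  · have hcb : E c b := hXY.rel_of_adj hcX hbY hbc.symm
    have hvc : E v c :=
      hE.rel_of_in_neighbors hab hva hcb (fun hvc => hvX (hvc ▸ hcX)) (hnoin c hcX)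
    exact ⟨c, hcX, hvc, Or.inl rfl⟩
  · have hbc : b = c := hY.eq_of_adj hbY (hc.resolve_left hcX) hbc
    exact hbc ▸ ⟨a, haX, hva, Or.inr hab⟩

theorem OutReach.of_reflTransGen {u w : V}
    (hpath : Relation.ReflTransGen (fun p q => p ∈ X ∪ Y ∧ q ∈ X ∪ Y ∧ Adj E p q) u w)
    (h : OutReach E X v u) : OutReach E X v w := by
  induction hpath with
  | refl => exact h
  | tail _ step ih => exact OutReach.of_adj hE hX hY hXY hvX hnoin step.1 step.2.1 step.2.2 ih

end Propagation

end Paper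

open Paper in
theorem stmt8_general {V : Type*} (E : V → V → Prop)
    (hALI : ArcLocallyInSemicomplete E) (X Y : Set V)
    (hXstab : Stable E X) (hYstab : Stable E Y)
    (hXY : NoBack E X Y)
    (hconn : ∀ a ∈ X ∪ Y, ∀ b ∈ X ∪ Y,
      Relation.ReflTransGen (fun p q => p ∈ X ∪ Y ∧ q ∈ X ∪ Y ∧ Adj E p q) a b)
    (v : V) (hv : v ∉ X ∪ Y) (hdom : ∃ x ∈ X, E v x)
    (hnoin : ∀ x ∈ X, ¬ E x v) :
    ∀ x ∈ X, E v x ∧ ¬ E x v := by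
  obtain ⟨x₀, hx₀, hvx₀⟩ := hdom
  intro x hx
  have hreach : OutReach E X v x :=
    OutReach.of_reflTransGen hALI hXstab hYstab hXY (fun h => hv (Or.inl h)) hnoin
      (hconn x₀ (Or.inl hx₀) x (Or.inl hx)) ⟨x₀, hx₀, hvx₀, Or.inl rfl⟩
  exact ⟨hreach.rel_of_mem hXstab hx, hnoin x hx⟩

open Paper in
theorem stmt8 {V : Type*} [Fintype V] (E : V → V → Prop)
    (hALI : ArcLocallyInSemicomplete E) (X Y : Set V)
    (hXne : X.Nonempty) (hYne : Y.Nonempty) (hdisj : Disjoint X Y)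
    (hXstab : Stable E X) (hYstab : Stable E Y)
    (hXY : NoBack E X Y)
    (hconn : ∀ a ∈ X ∪ Y, ∀ b ∈ X ∪ Y,
      Relation.ReflTransGen (fun p q => p ∈ X ∪ Y ∧ q ∈ X ∪ Y ∧ Adj E p q) a b)
    (v : V) (hv : v ∉ X ∪ Y) (hdom : ∃ x ∈ X, E v x)
    (hnoin : ∀ x ∈ X, ¬ E x v) :
    ∀ x ∈ X, E v x ∧ ¬ E x v :=
  stmt8_general E hALI X Y hXstab hYstab hXY hconn v hv hdom hnoin
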